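/- arXiv:2009.08320 — 3 statements merged into one kernel-verified Lean document; each statement's English description precedes it below -/
import Mathlib

section
/- Let λ > 0 and let σ be uniformly distributed on [-λ, λ]. Define φ_λ(s) = (|s| - λ)·1_{|s| ≥ λ}. Then for all real numbers a, b: |2λ·P(sign(a+σ) ≠ sign(b+σ)) − |a−b|| ≤ φ_λ(a) + φ_λ(b). -/
open MeasureTheory

noncomputable def sgn (t : ℝ) : ℝ := if 0 ≤ t then 1 else -1

/-- The uniform probability measure on the interval `[-l, l]`. -/
noncomputable def unifIcc (l : ℝ) : Measure ℝ :=
  (ENNReal.ofReal (2 * l))⁻¹ • (volume.restrict (Set.Icc (-l) l))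

noncomputable def phi (l s : ℝ) : ℝ := if l ≤ |s| then |s| - l else 0

lemma phi_nonneg (l s : ℝ) : 0 ≤ phi l s := by
  unfold phi; split_ifs with h
  · linarith
  · exact le_refl 0

lemma phi_ge1 (l s : ℝ) : s - l ≤ phi l s := by
  unfold phi; split_ifs with h
  · linarith [le_abs_self s]
  · push_neg at h; linarith [le_abs_self s]

lemma phi_ge2 (l s : ℝ) : -s - l ≤ phi l s := by
  unfold phi; split_ifs with h
  · linarith [neg_abs_le s]
  · push_neg at h; linarith [neg_abs_le s]

lemma set_eq (a b : ℝ) (hab : a ≤ b) :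
    {s : ℝ | sgn (a + s) ≠ sgn (b + s)} = Set.Ico (-b) (-a) := by
  ext s
  simp only [Set.mem_setOf_eq, Set.mem_Ico, sgn]
  constructor
  · intro h
    split_ifs at h with h1 h2 h2
    · exact absurd rfl h
    · exact (h2 (by linarith)).elim
    · exact ⟨by linarith, by linarith⟩
    · exact absurd rfl h
  · rintro ⟨hb, ha⟩
    have h1 : ¬ 0 ≤ a + s := by intro h'; linarith
    have h2 : 0 ≤ b + s := by linarith
    rw [if_neg h1, if_pos h2]
    norm_num

lemma vol_eq (l a b : ℝ) :
    volume (Set.Ico (-b) (-a) ∩ Set.Icc (-l) l) =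
      ENNReal.ofReal (min (-a) l - max (-b) (-l)) := by
  apply le_antisymm
  · refine (measure_mono ?_).trans_eq Real.volume_Icc
    rintro x ⟨⟨h1, h2⟩, h3, h4⟩
    exact ⟨max_le h1 h3, le_min h2.le h4⟩
  · refine le_trans (le_of_eq Real.volume_Ioo.symm) (measure_mono ?_)
    rintro x ⟨h1, h2⟩
    exact ⟨⟨((le_max_left _ _).trans_lt h1).le, h2.trans_le (min_le_left _ _)⟩,
      ((le_max_right _ _).trans_lt h1).le, (h2.trans_le (min_le_right _ _)).le⟩

lemma key (l a b : ℝ) (hl : 0 < l) (hab : a ≤ b) :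
    |max (min (-a) l - max (-b) (-l)) 0 - (b - a)| ≤ phi l a + phi l b := by
  have pa0 := phi_nonneg l a
  have pb0 := phi_nonneg l b
  have pa1 := phi_ge1 l a
  have pa2 := phi_ge2 l a
  have pb1 := phi_ge1 l b
  have pb2 := phi_ge2 l b
  rcases max_cases (min (-a) l - max (-b) (-l)) 0 with ⟨e, c⟩ | ⟨e, c⟩ <;>
    rcases min_cases (-a) l with ⟨e1, c1⟩ | ⟨e1, c1⟩ <;>
    rcases max_cases (-b) (-l) with ⟨e2, c2⟩ | ⟨e2, c2⟩ <;>
    rw [abs_le] <;> constructor <;> linarith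

theorem stmt0 (l : ℝ) (hl : 0 < l) (a b : ℝ) :
    abs (2 * l * (unifIcc l {s | sgn (a + s) ≠ sgn (b + s)}).toReal - |a - b|) ≤
      phi l a + phi l b := by
  wlog hab : a ≤ b generalizing a b
  · have hset : {s : ℝ | sgn (a + s) ≠ sgn (b + s)} = {s | sgn (b + s) ≠ sgn (a + s)} := by
      ext s; exact ne_comm
    rw [hset, abs_sub_comm a b, add_comm (phi l a)]
    exact this b a (le_of_not_ge hab)
  rw [set_eq a b hab]
  have hmeas : unifIcc l (Set.Ico (-b) (-a)) =
      (ENNReal.ofReal (2 * l))⁻¹ * ENNReal.ofReal (min (-a) l - max (-b) (-l)) := by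
    rw [unifIcc, Measure.smul_apply, smul_eq_mul,
      Measure.restrict_apply measurableSet_Ico, vol_eq]
  rw [hmeas]
  have h2l : (0:ℝ) < 2 * l := by linarith
  have htr : ((ENNReal.ofReal (2 * l))⁻¹ *
      ENNReal.ofReal (min (-a) l - max (-b) (-l))).toReal =
      (2 * l)⁻¹ * max (min (-a) l - max (-b) (-l)) 0 := by
    rw [ENNReal.toReal_mul, ENNReal.toReal_inv, ENNReal.toReal_ofReal h2l.le]
    rcases le_total (min (-a) l - max (-b) (-l)) 0 with h | h
    · rw [ENNReal.ofReal_eq_zero.mpr h, max_eq_right h, ENNReal.toReal_zero]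
    · rw [ENNReal.toReal_ofReal h, max_eq_left h]
  rw [htr]
  have hX : 2 * l * ((2 * l)⁻¹ * max (min (-a) l - max (-b) (-l)) 0) =
      max (min (-a) l - max (-b) (-l)) 0 := by field_simp
  rw [hX, abs_sub_comm a b, abs_of_nonneg (by linarith : (0:ℝ) ≤ b - a)]
  exact key l a b hl hab
end

section
/- Let λ > 0 and let σ, σ' be independent random variables, each uniformly distributed on [-λ, λ]. Define φ_λ(s) = (|s| − λ)·1_{|s| > λ}. Then for all real a, b: |λ²·E[sign(a+σ)·sign(b+σ')] − ab| ≤ φ_λ(a)·|b| + |a|·φ_λ(b). -/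
/-!
The expectation factors by Fubini. Since `sgn` is the right derivative of `|·|`,
`λ · E[sgn (a + σ)] = (|a + λ| - |a - λ|) / 2 =: c_a`, which is `a` clamped to `[-λ, λ]`.
Then `|c_a - a| = φ_λ(a)` and `|c_b| ≤ |b|`, and the claim follows from
`c_a c_b - a b = (c_a - a) c_b + a (c_b - b)`.
-/

open MeasureTheory

/-- `φ_λ(s) = (|s| - λ) 1_{|s| > λ}`. -/
noncomputable def phi' (l s : ℝ) : ℝ := if l < |s| then |s| - l else 0

open Set

instance (l : ℝ) : SFinite (unifIcc l) := by
  unfold unifIcc; infer_instance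

lemma monotone_sgn : Monotone sgn := by
  intro s t hst
  unfold sgn
  split_ifs <;> linarith

lemma hasDerivWithinAt_abs_Ioi (t : ℝ) : HasDerivWithinAt (|·|) (sgn t) (Ioi t) t := by
  rcases lt_or_ge t 0 with ht | ht
  · simpa [sgn, not_le.2 ht] using hasDerivWithinAt_abs_neg (Ioi t) ht
  · rw [sgn, if_pos ht]
    exact (hasDerivWithinAt_id t _).congr
      (fun y hy => abs_of_nonneg (ht.trans hy.le)) (abs_of_nonneg ht)

lemma integral_sgn (u v : ℝ) : ∫ x in u..v, sgn x = |v| - |u| :=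
  intervalIntegral.integral_eq_sub_of_hasDeriv_right continuous_abs.continuousOn
    (fun x _ => hasDerivWithinAt_abs_Ioi x) monotone_sgn.intervalIntegrable

/-- For `0 ≤ l`, `clip l a` is `a` clamped to `[-l, l]`. -/
noncomputable def clip (l a : ℝ) : ℝ := (|a + l| - |a - l|) / 2

lemma integral_sgn_add_unifIcc {l : ℝ} (hl : 0 < l) (a : ℝ) :
    ∫ x, sgn (a + x) ∂unifIcc l = clip l a / l := by
  rw [unifIcc, integral_smul_measure, integral_Icc_eq_integral_Ioc,
    ← intervalIntegral.integral_of_le (by linarith), intervalIntegral.integral_comp_add_left,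
    integral_sgn, ENNReal.toReal_inv, ENNReal.toReal_ofReal (by linarith), clip, smul_eq_mul]
  field_simp
  ring_nf

lemma abs_clip_le (l a : ℝ) : |clip l a| ≤ |a| :=
  calc |clip l a| = |(|a + l| - |l - a|)| / 2 := by rw [clip, abs_div, abs_two, abs_sub_comm a l]
    _ ≤ |(a + l) - (l - a)| / 2 := by
      gcongr ?_ / _
      exact abs_abs_sub_abs_le_abs_sub (a + l) (l - a)
    _ = |a| := by rw [show a + l - (l - a) = 2 * a by ring, abs_mul, abs_two]; ring

lemma abs_clip_sub_self {l : ℝ} (hl : 0 ≤ l) (a : ℝ) : |clip l a - a| = phi' l a := by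
  unfold clip phi'
  grind

lemma abs_mul_sub_mul_le {a b c d : ℝ} (hd : |d| ≤ |b|) :
    |c * d - a * b| ≤ |c - a| * |b| + |a| * |d - b| :=
  calc |c * d - a * b| = |(c - a) * d + a * (d - b)| := by ring_nf
    _ ≤ |c - a| * |d| + |a| * |d - b| := by
      simpa only [abs_mul] using abs_add_le ((c - a) * d) (a * (d - b))
    _ ≤ |c - a| * |b| + |a| * |d - b| := by gcongr

theorem stmt2 (l : ℝ) (hl : 0 < l) (a b : ℝ) :
    |l ^ 2 * ∫ p : ℝ × ℝ, sgn (a + p.1) * sgn (b + p.2)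
        ∂((unifIcc l).prod (unifIcc l)) - a * b| ≤
      phi' l a * |b| + |a| * phi' l b := by
  rw [integral_prod_mul (fun x => sgn (a + x)) (fun y => sgn (b + y)),
    integral_sgn_add_unifIcc hl, integral_sgn_add_unifIcc hl,
    show l ^ 2 * (clip l a / l * (clip l b / l)) = clip l a * clip l b by field_simp,
    ← abs_clip_sub_self hl.le, ← abs_clip_sub_self hl.le]
  exact abs_mul_sub_mul_le (abs_clip_le l b)
end

section
/- Let A ∈ ℝ^{m×n}, let Σ_{s,n} be the set of s-sparse vectors of Euclidean norm at most 1 in ℝⁿ, and let Σ_{s,m} be the analogous set in ℝ^m. If A satisfies RIP(s,δ) (i.e., |‖Ax‖₂² − ‖x‖₂²| ≤ max{δ,δ²}‖x‖₂² for all s-sparse x) and sup_{x∈Σ_{s,n}} ‖Ax‖_{[s]} ≤ max{δ,δ²}, then sup over x ∈ Σ_{s,n}, y ∈ Σ_{s,m} of |‖[A Id_m](x,y)ᵀ‖₂² − ‖(x,y)ᵀ‖₂²| ≤ 3·max{δ,δ²}. -/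
/-!
Since `[A Id](x, y) = Ax + y`, the deviation is `(‖Ax‖² - ‖x‖²) + 2⟨Ax, y⟩`. RIP bounds the first
term by `max δ δ²`; the cross term only sees the at most `s` coordinates in the support of `y`, so
Cauchy–Schwarz on that support bounds it by `‖Ax‖_[s] ‖y‖ ≤ max δ δ²`.
-/

open Matrix

/-- `x` is `s`-sparse: it has at most `s` nonzero entries. -/
def sparse {ι : Type*} (s : ℕ) (x : ι → ℝ) : Prop := {i | x i ≠ 0}.ncard ≤ s

/-- `A` satisfies the restricted isometry property `RIP(s, δ)`. -/
def RIP {m : ℕ} {ι : Type*} [Fintype ι] (A : Matrix (Fin m) ι ℝ) (s : ℕ) (δ : ℝ) : Prop :=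
  ∀ x : ι → ℝ, sparse s x →
    |A.mulVec x ⬝ᵥ A.mulVec x - x ⬝ᵥ x| ≤ max δ (δ ^ 2) * (x ⬝ᵥ x)

open Finset

lemma card_filter_ne_zero_le_of_sparse {ι : Type*} [Fintype ι] {s : ℕ} {y : ι → ℝ}
    (hy : sparse s y) : #{i | y i ≠ 0} ≤ s := by
  rwa [← Set.ncard_coe_finset, coe_filter_univ]

lemma dotProduct_eq_sum_filter_ne_zero {ι : Type*} [Fintype ι] (u y : ι → ℝ) :
    u ⬝ᵥ y = ∑ i ∈ {i | y i ≠ 0}, u i * y i :=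
  (sum_subset (subset_univ _) fun i _ hi => by simp_all).symm

lemma abs_sum_mul_le_sqrt_mul_sqrt {ι : Type*} (I : Finset ι) (u y : ι → ℝ) :
    |∑ i ∈ I, u i * y i| ≤ √(∑ i ∈ I, u i ^ 2) * √(∑ i ∈ I, y i ^ 2) := by
  rw [← Real.sqrt_mul (sum_nonneg fun i _ => sq_nonneg (u i))]
  exact Real.abs_le_sqrt (sum_mul_sq_le_sq_mul_sq I u y)

lemma abs_dotProduct_le_of_sparse {ι : Type*} [Fintype ι] {s : ℕ} {u y : ι → ℝ} {c : ℝ}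
    (hu : ∀ I : Finset ι, #I ≤ s → √(∑ i ∈ I, u i ^ 2) ≤ c)
    (hy : sparse s y) (hy1 : y ⬝ᵥ y ≤ 1) : |u ⬝ᵥ y| ≤ c := by
  set I : Finset ι := {i | y i ≠ 0}
  have hc : 0 ≤ c := by simpa using hu ∅ (by simp)
  have hyI : √(∑ i ∈ I, y i ^ 2) ≤ 1 := by
    refine Real.sqrt_le_one.mpr ((sum_le_sum_of_subset_of_nonneg (subset_univ I)
      fun i _ _ => sq_nonneg (y i)).trans ?_)
    simpa [dotProduct, sq] using hy1
  calc |u ⬝ᵥ y| ≤ √(∑ i ∈ I, u i ^ 2) * √(∑ i ∈ I, y i ^ 2) := by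
        rw [dotProduct_eq_sum_filter_ne_zero]; exact abs_sum_mul_le_sqrt_mul_sqrt I u y
    _ ≤ c * 1 := mul_le_mul (hu I (card_filter_ne_zero_le_of_sparse hy)) hyI
        (Real.sqrt_nonneg _) hc
    _ = c := mul_one c

theorem stmt10_general (m n : ℕ) (A : Matrix (Fin m) (Fin n) ℝ) (s : ℕ) (δ : ℝ)
    (hRIP : RIP A s δ)
    (hkNorm : ∀ x : Fin n → ℝ, sparse s x → x ⬝ᵥ x ≤ 1 →
      ∀ I : Finset (Fin m), I.card ≤ s →
        Real.sqrt (∑ i ∈ I, (A.mulVec x i) ^ 2) ≤ max δ (δ ^ 2)) :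
    ∀ x : Fin n → ℝ, sparse s x → x ⬝ᵥ x ≤ 1 →
      ∀ y : Fin m → ℝ, sparse s y → y ⬝ᵥ y ≤ 1 →
        |(Matrix.fromCols A (1 : Matrix (Fin m) (Fin m) ℝ)).mulVec (Sum.elim x y) ⬝ᵥ
            (Matrix.fromCols A (1 : Matrix (Fin m) (Fin m) ℝ)).mulVec (Sum.elim x y) -
          Sum.elim x y ⬝ᵥ Sum.elim x y| ≤ 3 * max δ (δ ^ 2) := by
  intro x hx hx1 y hy hy1
  set D := max δ (δ ^ 2)
  set u := A *ᵥ x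
  have hD : 0 ≤ D := (sq_nonneg δ).trans (le_max_right _ _)
  have hRIPx : |u ⬝ᵥ u - x ⬝ᵥ x| ≤ D := (hRIP x hx).trans (mul_le_of_le_one_right hD hx1)
  have hcross : |u ⬝ᵥ y| ≤ D := abs_dotProduct_le_of_sparse (hkNorm x hx hx1) hy hy1
  rw [fromCols_mulVec_sumElim, one_mulVec, sumElim_dotProduct_sumElim]
  calc |(u + y) ⬝ᵥ (u + y) - (x ⬝ᵥ x + y ⬝ᵥ y)| = |(u ⬝ᵥ u - x ⬝ᵥ x) + 2 * (u ⬝ᵥ y)| := by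
        rw [add_dotProduct, dotProduct_add, dotProduct_add, dotProduct_comm y u]; ring_nf
    _ ≤ |u ⬝ᵥ u - x ⬝ᵥ x| + 2 * |u ⬝ᵥ y| :=
        (abs_add_le _ _).trans_eq (by rw [abs_mul, abs_two])
    _ ≤ 3 * D := by linarith

theorem stmt10 (m n : ℕ) (A : Matrix (Fin m) (Fin n) ℝ) (s : ℕ) (δ : ℝ) (hδ : 0 < δ)
    (hRIP : RIP A s δ)
    (hkNorm : ∀ x : Fin n → ℝ, sparse s x → x ⬝ᵥ x ≤ 1 →
      ∀ I : Finset (Fin m), I.card ≤ s →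
        Real.sqrt (∑ i ∈ I, (A.mulVec x i) ^ 2) ≤ max δ (δ ^ 2)) :
    ∀ x : Fin n → ℝ, sparse s x → x ⬝ᵥ x ≤ 1 →
      ∀ y : Fin m → ℝ, sparse s y → y ⬝ᵥ y ≤ 1 →
        |(Matrix.fromCols A (1 : Matrix (Fin m) (Fin m) ℝ)).mulVec (Sum.elim x y) ⬝ᵥ
            (Matrix.fromCols A (1 : Matrix (Fin m) (Fin m) ℝ)).mulVec (Sum.elim x y) -
          Sum.elim x y ⬝ᵥ Sum.elim x y| ≤ 3 * max δ (δ ^ 2) :=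
  stmt10_general m n A s δ hRIP hkNorm
end
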